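/- Let G = ∫_0^1 1/(1 − log v) dv (natural logarithm, integral over (0,1)). Then for every natural number n, G = ∑_{k=0}^{n-1} (-1)^k · k! + (-1)^n · n! · ∫_0^1 (1 − log v)^{-(n+1)} dv. -/

import Mathlib

/-!
With `L v = 1 - log v ≥ 1` on `[0, 1]`, the function `v / L v ^ m` is continuous on `[0, 1]`,
vanishes at `0`, equals `1` at `1`, and has derivative `1 / L ^ m + m / L ^ (m + 1)`. Integrating
gives `I m = 1 - m I (m + 1)` for `I m = ∫_0^1 L ^ (-m)`, and unrolling this recurrence from
`I 1 = G` produces the alternating factorial series with remainder `(-1)^n n! I (n + 1)`.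
-/

open MeasureTheory Set Real Filter intervalIntegral

lemma one_le_one_sub_log {v : ℝ} (h0 : 0 ≤ v) (h1 : v ≤ 1) : 1 ≤ 1 - log v := by
  linarith [log_nonpos h0 h1]

lemma intervalIntegrable_one_div_one_sub_log_pow (m : ℕ) :
    IntervalIntegrable (fun v : ℝ => 1 / (1 - log v) ^ m) volume 0 1 := by
  rw [intervalIntegrable_iff_integrableOn_Ioc_of_le zero_le_one]
  refine Measure.integrableOn_of_bounded (M := 1) (by simp)
    (by fun_prop : Measurable _).aestronglyMeasurable ?_
  filter_upwards [ae_restrict_mem measurableSet_Ioc] with v hv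
  have hL : 1 ≤ (1 - log v) ^ m := one_le_pow₀ (one_le_one_sub_log hv.1.le hv.2)
  rw [norm_of_nonneg (by positivity), div_le_one (by positivity)]
  exact hL

lemma hasDerivAt_div_one_sub_log_pow (m : ℕ) {v : ℝ} (hv : v ≠ 0) (hL : 1 - log v ≠ 0) :
    HasDerivAt (fun v : ℝ => v / (1 - log v) ^ m)
      (1 / (1 - log v) ^ m + m * (1 / (1 - log v) ^ (m + 1))) v := by
  have hpow : HasDerivAt (fun v : ℝ => (1 - log v) ^ m) (m * (1 - log v) ^ (m - 1) * -v⁻¹) v :=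
    ((hasDerivAt_log hv).const_sub 1).fun_pow m
  have hquot := (hasDerivAt_id' v).fun_div hpow (pow_ne_zero m hL)
  refine hquot.congr_deriv ?_
  rcases m with _ | m
  · simp
  · rw [Nat.add_sub_cancel]
    field_simp
    ring

lemma continuousOn_div_one_sub_log_pow (m : ℕ) :
    ContinuousOn (fun v : ℝ => v / (1 - log v) ^ m) (Icc 0 1) := by
  intro v hv
  rcases hv.1.eq_or_lt with rfl | hpos
  · have hbound : ∀ v ∈ Icc (0 : ℝ) 1, ‖v / (1 - log v) ^ m‖ ≤ ‖v‖ := fun v hv => by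
      rw [norm_div, norm_pow]
      exact div_le_self (norm_nonneg v)
        (one_le_pow₀ ((one_le_one_sub_log hv.1 hv.2).trans (le_norm_self _)))
    rw [ContinuousWithinAt, zero_div]
    exact squeeze_zero_norm' (eventually_nhdsWithin_of_forall hbound)
      (tendsto_norm_zero.mono_left nhdsWithin_le_nhds)
  · have hL := one_le_one_sub_log hv.1 hv.2
    exact (hasDerivAt_div_one_sub_log_pow m hpos.ne' (by linarith)).continuousAt.continuousWithinAt

lemma integral_one_div_one_sub_log_pow (m : ℕ) :
    ∫ v in Ioo (0 : ℝ) 1, 1 / (1 - log v) ^ m =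
      1 - m * ∫ v in Ioo (0 : ℝ) 1, 1 / (1 - log v) ^ (m + 1) := by
  have hFTC := integral_eq_sub_of_hasDerivAt_of_le zero_le_one
    (continuousOn_div_one_sub_log_pow m)
    (fun v hv => hasDerivAt_div_one_sub_log_pow m hv.1.ne'
      (by linarith [one_le_one_sub_log hv.1.le hv.2.le]))
    ((intervalIntegrable_one_div_one_sub_log_pow m).add
      ((intervalIntegrable_one_div_one_sub_log_pow (m + 1)).const_mul m))
  rw [integral_add (intervalIntegrable_one_div_one_sub_log_pow m)
      ((intervalIntegrable_one_div_one_sub_log_pow (m + 1)).const_mul m),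
    intervalIntegral.integral_const_mul] at hFTC
  simp only [integral_of_le zero_le_one, integral_Ioc_eq_integral_Ioo, log_one, log_zero,
    sub_zero, one_pow, div_one] at hFTC
  linarith

theorem gompertz_factorial_series_remainder
    (G : ℝ) (hG : G = ∫ v in Set.Ioo (0 : ℝ) 1, 1 / (1 - Real.log v)) :
    ∀ n : ℕ,
      G = (∑ k ∈ Finset.range n, (-1 : ℝ) ^ k * (Nat.factorial k : ℝ)) +
        (-1 : ℝ) ^ n * (Nat.factorial n : ℝ) *
          ∫ v in Set.Ioo (0 : ℝ) 1, 1 / (1 - Real.log v) ^ (n + 1) := by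
  intro n
  induction n with
  | zero => simpa using hG
  | succ n ih =>
    rw [integral_one_div_one_sub_log_pow (n + 1)] at ih
    rw [Finset.sum_range_succ, ih]
    push_cast [Nat.factorial_succ]
    ring
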